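/- arXiv:1501.07662 — 5 statements merged into one kernel-verified Lean document; each statement's English description precedes it below -/
import Mathlib

section
/- Let τ > 0, ω₀ = 2π/τ, let K be a positive integer and m₀ ∈ ℤ. Let μ, ν : [0,τ) → ℂ be finitely supported functions, each having support of cardinality at most K. If Σ_{t ∈ supp(μ)} μ(t) e^{−i m ω₀ t} = Σ_{t ∈ supp(ν)} ν(t) e^{−i m ω₀ t} for all of the 2K+1 consecutive integers m with m₀ ≤ m ≤ m₀ + 2K, then μ = ν. In other words, a spike train with at most K spikes supported in [0,τ) is uniquely determined by any 2K+1 consecutive Fourier coefficients. -/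
open Complex

open Polynomial in
lemma key_vanish {α : Type*} [DecidableEq α] (n : ℕ) (S : Finset α) (z b : α → ℂ)
    (hinj : Set.InjOn z S) (hcard : S.card ≤ n + 1)
    (h : ∀ k : ℕ, k ≤ n → ∑ t ∈ S, b t * z t ^ k = 0) :
    ∀ t ∈ S, b t = 0 := by
  intro t₀ ht₀
  set q : Polynomial ℂ := ∏ t ∈ S.erase t₀, (X - C (z t)) with hq
  have hdeg : q.natDegree ≤ n := by
    rw [hq, Polynomial.natDegree_prod _ _ (fun t _ => X_sub_C_ne_zero (z t))]
    simp only [natDegree_X_sub_C, Finset.sum_const, smul_eq_mul, mul_one]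
    have := Finset.card_erase_of_mem ht₀
    omega
  have hsum0 : ∑ t ∈ S, b t * q.eval (z t) = 0 := by
    have : ∀ t ∈ S, b t * q.eval (z t) =
        ∑ k ∈ Finset.range (n + 1), q.coeff k * (b t * z t ^ k) := by
      intro t _
      rw [Polynomial.eval_eq_sum_range' (lt_of_le_of_lt hdeg (Nat.lt_succ_self n))]
      rw [Finset.mul_sum]
      refine Finset.sum_congr rfl fun k _ => by ring
    rw [Finset.sum_congr rfl this, Finset.sum_comm]
    refine Finset.sum_eq_zero fun k hk => ?_
    rw [← Finset.mul_sum, h k (Nat.lt_succ_iff.mp (Finset.mem_range.mp hk)), mul_zero]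
  have hsingle : ∑ t ∈ S, b t * q.eval (z t) = b t₀ * q.eval (z t₀) := by
    refine Finset.sum_eq_single t₀ (fun t ht hne => ?_) (fun habs => absurd ht₀ habs)
    have : q.eval (z t) = 0 := by
      rw [hq, Polynomial.eval_prod]
      exact Finset.prod_eq_zero (Finset.mem_erase.mpr ⟨hne, ht⟩) (by simp [eval_sub])
    rw [this, mul_zero]
  have hq0 : q.eval (z t₀) ≠ 0 := by
    rw [hq, Polynomial.eval_prod]
    refine Finset.prod_ne_zero_iff.mpr fun t ht => ?_
    simp only [eval_sub, eval_X, eval_C, sub_ne_zero]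
    exact fun he => (Finset.mem_erase.mp ht).1 (hinj (Finset.mem_of_mem_erase ht) ht₀ he.symm)
  have := hsingle ▸ hsum0
  exact (mul_eq_zero.mp this).resolve_right hq0


/-- A spike train with at most `K` spikes supported in `[0, τ)` (a finitely supported
function `μ : [0,τ) → ℂ` with `|supp μ| ≤ K`) is uniquely determined by any `2K + 1`
consecutive Fourier coefficients `∑_t μ(t) e^{-i m ω₀ t}`, `m₀ ≤ m ≤ m₀ + 2K`. -/
theorem spike_train_unique_of_consecutive_fourier_coeffs
    (τ : ℝ) (hτ : 0 < τ) (ω₀ : ℝ) (hω₀ : ω₀ = 2 * Real.pi / τ)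
    (K : ℕ) (hK : 0 < K) (m₀ : ℤ)
    (μ ν : (Set.Ico (0 : ℝ) τ) →₀ ℂ)
    (hμ : μ.support.card ≤ K) (hν : ν.support.card ≤ K)
    (h : ∀ m : ℤ, m₀ ≤ m → m ≤ m₀ + 2 * (K : ℤ) →
      ∑ t ∈ μ.support, μ t * Complex.exp (-Complex.I * (m : ℂ) * (ω₀ : ℂ) * ((t : ℝ) : ℂ)) =
      ∑ t ∈ ν.support, ν t * Complex.exp (-Complex.I * (m : ℂ) * (ω₀ : ℂ) * ((t : ℝ) : ℂ))) :
    μ = ν := by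
  classical
  have hω₀pos : 0 < ω₀ := by
    rw [hω₀]; positivity
  have hωτ : ω₀ * τ = 2 * Real.pi := by
    rw [hω₀]; field_simp
  set S : Finset (Set.Ico (0 : ℝ) τ) := μ.support ∪ ν.support with hS
  set z : (Set.Ico (0 : ℝ) τ) → ℂ := fun t => Complex.exp (-Complex.I * ω₀ * ((t : ℝ) : ℂ)) with hz
  set b : (Set.Ico (0 : ℝ) τ) → ℂ :=
    fun t => (μ t - ν t) * Complex.exp (-Complex.I * (m₀ : ℂ) * ω₀ * ((t : ℝ) : ℂ)) with hb
  -- injectivity of z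
  have hinj : Set.InjOn z S := by
    intro t _ t' _ he
    obtain ⟨n, hn⟩ := Complex.exp_eq_exp_iff_exists_int.mp he
    have hI : (Complex.I) * ((ω₀ * ((t' : ℝ) - (t : ℝ)) : ℝ) : ℂ)
        = Complex.I * ((2 * Real.pi * (n : ℝ) : ℝ) : ℂ) := by
      push_cast
      linear_combination hn
    have hr : ω₀ * ((t' : ℝ) - (t : ℝ)) = 2 * Real.pi * (n : ℝ) := by
      have := mul_left_cancel₀ Complex.I_ne_zero hI
      exact_mod_cast this
    have ht1 := t.2
    have ht2 := t'.2
    simp only [Set.mem_Ico] at ht1 ht2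
    have habs : |(t' : ℝ) - (t : ℝ)| < τ := by
      rw [abs_lt]; constructor <;> nlinarith
    have hbound : |ω₀ * ((t' : ℝ) - (t : ℝ))| < 2 * Real.pi := by
      rw [abs_mul, abs_of_pos hω₀pos]
      calc ω₀ * |(t' : ℝ) - (t : ℝ)| < ω₀ * τ := by
            exact (mul_lt_mul_iff_right₀ hω₀pos).mpr habs
        _ = 2 * Real.pi := hωτ
    rw [hr, abs_mul, abs_of_pos (by positivity : (0:ℝ) < 2 * Real.pi)] at hbound
    have hn0 : |(n : ℝ)| < 1 := by
      have h2π : (0:ℝ) < 2 * Real.pi := by positivity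
      nlinarith
    have : (n : ℤ) = 0 := by
      have h2 : ((|n| : ℤ) : ℝ) < 1 := by push_cast; exact hn0
      have h3 : |n| < 1 := by exact_mod_cast h2
      rw [abs_lt] at h3
      omega
    rw [this] at hr
    have : (t' : ℝ) = (t : ℝ) := by
      have := hr
      push_cast at this
      nlinarith
    exact Subtype.ext this.symm
  have hcardS : S.card ≤ 2 * K := by
    calc S.card ≤ μ.support.card + ν.support.card := Finset.card_union_le _ _
      _ ≤ 2 * K := by omega
  -- the key sums vanish
  have hsum : ∀ k : ℕ, k ≤ 2 * K → ∑ t ∈ S, b t * z t ^ k = 0 := by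
    intro k hk
    have hm := h (m₀ + k) (by omega) (by push_cast; omega)
    have hext : ∀ (f : (Set.Ico (0 : ℝ) τ) →₀ ℂ), f.support ⊆ S →
        ∑ t ∈ f.support, f t * Complex.exp (-Complex.I * ((m₀ + k : ℤ) : ℂ) * (ω₀ : ℂ) * ((t : ℝ) : ℂ))
        = ∑ t ∈ S, f t * Complex.exp (-Complex.I * ((m₀ + k : ℤ) : ℂ) * (ω₀ : ℂ) * ((t : ℝ) : ℂ)) := by
      intro f hf
      refine Finset.sum_subset hf fun t _ ht => ?_
      rw [Finsupp.notMem_support_iff.mp ht, zero_mul]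
    rw [hext μ (Finset.subset_union_left), hext ν (Finset.subset_union_right)] at hm
    have hμν : ∑ t ∈ S, (μ t - ν t) *
        Complex.exp (-Complex.I * ((m₀ + k : ℤ) : ℂ) * (ω₀ : ℂ) * ((t : ℝ) : ℂ)) = 0 := by
      simp only [sub_mul, Finset.sum_sub_distrib, hm, sub_self]
    rw [← hμν]
    refine Finset.sum_congr rfl fun t _ => ?_
    rw [hb, hz]
    simp only
    rw [← Complex.exp_nat_mul, mul_assoc, ← Complex.exp_add]
    congr 2
    push_cast
    ring
  have hzero := key_vanish (2 * K) S z b hinj (by omega) hsum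
  ext t
  by_cases htS : t ∈ S
  · have hb0 := hzero t htS
    rw [hb] at hb0
    simp only at hb0
    have := (mul_eq_zero.mp hb0).resolve_right (Complex.exp_ne_zero _)
    exact sub_eq_zero.mp this
  · rw [hS, Finset.mem_union, not_or] at htS
    rw [Finsupp.notMem_support_iff.mp htS.1, Finsupp.notMem_support_iff.mp htS.2]
end

section
/- Let Λ = [[a,b],[c,d]] be a real 2×2 matrix with ad − bc = 1 and b > 0, let τ > 0, Ω > 0, ω₀ = 2π/τ, and set f_c = ⌊Ωτ/(2b)⌋. Suppose f_c ≥ K for a positive integer K. For a spike train s = Σ_{k} c_k δ_{t_k} with at most K spikes (nonzero complex amplitudes c_k and distinct locations t_k ∈ [0,τ)), define its low-pass phase-space data ŷ[m] = Σ_k c_k e^{i a t_k²/(2b)} e^{−i m ω₀ t_k} for integers m with |m| ≤ f_c. Then the map from such spike trains to their data is injective: if two spike trains, each with at most K spikes supported in [0,τ), produce the same data ŷ[m] for all |m| ≤ f_c, then they have the same amplitudes and locations. -/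
open Complex

open Polynomial in
lemma vand {α : Type*} [DecidableEq α] (S : Finset α) (z w : α → ℂ) (n : ℕ)
    (hcard : S.card ≤ n + 1)
    (hinj : ∀ s ∈ S, ∀ t ∈ S, z s = z t → s = t)
    (hmom : ∀ j ≤ n, ∑ t ∈ S, w t * z t ^ j = 0) :
    ∀ t ∈ S, w t = 0 := by
  intro t₀ ht₀
  set p : ℂ[X] := ∏ s ∈ S.erase t₀, (X - C (z s)) with hp
  have hdeg : p.natDegree ≤ n := by
    refine le_trans (natDegree_prod_le _ _) ?_
    simp only [natDegree_X_sub_C, Finset.sum_const, smul_eq_mul, mul_one]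
    have := Finset.card_erase_of_mem ht₀
    omega
  have key : ∑ t ∈ S, w t * p.eval (z t) = 0 := by
    have heval : ∀ t : α, p.eval (z t) = ∑ j ∈ Finset.range (n + 1), p.coeff j * z t ^ j :=
      fun t => eval_eq_sum_range' (lt_of_le_of_lt hdeg (Nat.lt_succ_self n)) _
    simp_rw [heval, Finset.mul_sum]
    rw [Finset.sum_comm]
    refine Finset.sum_eq_zero fun j hj => ?_
    have h0 := hmom j (Nat.lt_succ_iff.mp (Finset.mem_range.mp hj))
    calc ∑ t ∈ S, w t * (p.coeff j * z t ^ j)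
        = p.coeff j * ∑ t ∈ S, w t * z t ^ j := by
          rw [Finset.mul_sum]; exact Finset.sum_congr rfl fun t _ => by ring
      _ = 0 := by rw [h0, mul_zero]
  have hsingle : ∑ t ∈ S, w t * p.eval (z t) = w t₀ * p.eval (z t₀) := by
    refine Finset.sum_eq_single_of_mem t₀ ht₀ fun t ht hne => ?_
    have : p.eval (z t) = 0 := by
      rw [hp, eval_prod]
      exact Finset.prod_eq_zero (Finset.mem_erase.mpr ⟨hne, ht⟩) (by simp)
    rw [this, mul_zero]
  have hne : p.eval (z t₀) ≠ 0 := by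
    rw [hp, eval_prod]
    refine Finset.prod_ne_zero_iff.mpr fun s hs => ?_
    have hs' := Finset.mem_erase.mp hs
    simp only [eval_sub, eval_X, eval_C, sub_ne_zero]
    exact fun he => hs'.1 (hinj s hs'.2 t₀ ht₀ he.symm)
  rw [hsingle] at key
  exact (mul_eq_zero.mp key).resolve_right hne

/-- **Injectivity of low-pass phase-space data.**  With `f_c = ⌊Ωτ/(2b)⌋ ≥ K`, a spike
train with at most `K` spikes supported in `[0, τ)` is uniquely determined by its low-pass
phase-space data `ŷ[m] = ∑_k c_k e^{i a t_k²/(2b)} e^{-i m ω₀ t_k}` for `|m| ≤ f_c`: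
two such spike trains with the same data coincide (same amplitudes and locations). -/
theorem spike_train_phase_space_data_injective
    (a b c d : ℝ) (hdet : a * d - b * c = 1) (hb : 0 < b)
    (τ Ω : ℝ) (hτ : 0 < τ) (hΩ : 0 < Ω)
    (ω₀ : ℝ) (hω₀ : ω₀ = 2 * Real.pi / τ)
    (f_c : ℤ) (hfc : f_c = ⌊Ω * τ / (2 * b)⌋)
    (K : ℕ) (hK : 0 < K) (hKfc : (K : ℤ) ≤ f_c)
    (μ ν : (Set.Ico (0 : ℝ) τ) →₀ ℂ)
    (hμ : μ.support.card ≤ K) (hν : ν.support.card ≤ K)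
    (h : ∀ m : ℤ, |m| ≤ f_c →
      ∑ t ∈ μ.support, μ t * Complex.exp (Complex.I * (a : ℂ) * ((t : ℝ) : ℂ) ^ 2 / (2 * (b : ℂ))) *
        Complex.exp (-Complex.I * (m : ℂ) * (ω₀ : ℂ) * ((t : ℝ) : ℂ)) =
      ∑ t ∈ ν.support, ν t * Complex.exp (Complex.I * (a : ℂ) * ((t : ℝ) : ℂ) ^ 2 / (2 * (b : ℂ))) *
        Complex.exp (-Complex.I * (m : ℂ) * (ω₀ : ℂ) * ((t : ℝ) : ℂ))) :
    μ = ν := by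
  classical
  set S : Finset (Set.Ico (0 : ℝ) τ) := μ.support ∪ ν.support with hS
  set z : (Set.Ico (0 : ℝ) τ) → ℂ :=
    fun t => Complex.exp (-Complex.I * (ω₀ : ℂ) * ((t : ℝ) : ℂ)) with hz
  set w : (Set.Ico (0 : ℝ) τ) → ℂ := fun t =>
    (μ t - ν t) * Complex.exp (Complex.I * (a : ℂ) * ((t : ℝ) : ℂ) ^ 2 / (2 * (b : ℂ))) *
      Complex.exp (Complex.I * (K : ℂ) * (ω₀ : ℂ) * ((t : ℝ) : ℂ)) with hw
  have hω₀pos : 0 < ω₀ := by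
    rw [hω₀]; positivity
  -- injectivity of z
  have hinj : ∀ s ∈ S, ∀ t ∈ S, z s = z t → s = t := by
    intro s _ t _ hst
    rw [hz] at hst
    obtain ⟨n, hn⟩ := Complex.exp_eq_exp_iff_exists_int.mp hst
    have hre : -(ω₀ * (s : ℝ)) = -(ω₀ * (t : ℝ)) + n * (2 * Real.pi) := by
      have := congrArg Complex.im hn
      simpa using this
    have hsmem := s.2
    have htmem := t.2
    have hτne : τ ≠ 0 := ne_of_gt hτ
    have hval : (s : ℝ) - (t : ℝ) = -(n * τ) := by
      have h2 : ω₀ * ((t : ℝ) - (s : ℝ)) = n * (2 * Real.pi) := by linarith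
      rw [hω₀] at h2
      have hπ : (0:ℝ) < Real.pi := Real.pi_pos
      field_simp at h2
      nlinarith [h2]
    have hbound : |(s : ℝ) - (t : ℝ)| < τ := by
      rw [abs_sub_lt_iff]
      constructor
      · linarith [hsmem.1, hsmem.2, htmem.1, htmem.2]
      · linarith [hsmem.1, hsmem.2, htmem.1, htmem.2]
    have hn0 : n = 0 := by
      by_contra hn0
      have : (1 : ℝ) ≤ |(n : ℝ)| := by
        have : (1 : ℤ) ≤ |n| := Int.one_le_abs hn0
        exact_mod_cast this
      have : τ ≤ |(s : ℝ) - (t : ℝ)| := by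
        rw [hval, abs_neg, abs_mul, abs_of_pos hτ]
        nlinarith
      linarith
    have : (s : ℝ) = (t : ℝ) := by
      rw [hn0] at hval; push_cast at hval; linarith
    exact Subtype.ext this
  -- moment conditions
  have hmom : ∀ j ≤ 2 * K, ∑ t ∈ S, w t * z t ^ j = 0 := by
    intro j hj
    set m : ℤ := (j : ℤ) - K with hm
    have hmabs : |m| ≤ f_c := by
      rw [hm]
      refine le_trans ?_ hKfc
      rw [abs_le]
      omega
    have hpt : ∀ t : (Set.Ico (0 : ℝ) τ), w t * z t ^ j =
        (μ t - ν t) *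
          Complex.exp (Complex.I * (a : ℂ) * ((t : ℝ) : ℂ) ^ 2 / (2 * (b : ℂ))) *
          Complex.exp (-Complex.I * (m : ℂ) * (ω₀ : ℂ) * ((t : ℝ) : ℂ)) := by
      intro t
      rw [hw, hz, ← Complex.exp_nat_mul, mul_assoc, ← Complex.exp_add]
      congr 2
      push_cast [hm]
      ring
    have hsplit : ∑ t ∈ S, w t * z t ^ j =
        (∑ t ∈ S,
          μ t * Complex.exp (Complex.I * (a : ℂ) * ((t : ℝ) : ℂ) ^ 2 / (2 * (b : ℂ))) *
            Complex.exp (-Complex.I * (m : ℂ) * (ω₀ : ℂ) * ((t : ℝ) : ℂ))) -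
        (∑ t ∈ S,
          ν t * Complex.exp (Complex.I * (a : ℂ) * ((t : ℝ) : ℂ) ^ 2 / (2 * (b : ℂ))) *
            Complex.exp (-Complex.I * (m : ℂ) * (ω₀ : ℂ) * ((t : ℝ) : ℂ))) := by
      rw [← Finset.sum_sub_distrib]
      exact Finset.sum_congr rfl fun t _ => by rw [hpt t]; ring
    rw [hsplit]
    have hsumμ : ∑ t ∈ S,
        μ t * Complex.exp (Complex.I * (a : ℂ) * ((t : ℝ) : ℂ) ^ 2 / (2 * (b : ℂ))) *
          Complex.exp (-Complex.I * (m : ℂ) * (ω₀ : ℂ) * ((t : ℝ) : ℂ)) =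
        ∑ t ∈ μ.support,
        μ t * Complex.exp (Complex.I * (a : ℂ) * ((t : ℝ) : ℂ) ^ 2 / (2 * (b : ℂ))) *
          Complex.exp (-Complex.I * (m : ℂ) * (ω₀ : ℂ) * ((t : ℝ) : ℂ)) := by
      refine (Finset.sum_subset (Finset.subset_union_left) fun t _ ht => ?_).symm
      rw [Finsupp.notMem_support_iff.mp ht, zero_mul, zero_mul]
    have hsumν : ∑ t ∈ S,
        ν t * Complex.exp (Complex.I * (a : ℂ) * ((t : ℝ) : ℂ) ^ 2 / (2 * (b : ℂ))) *
          Complex.exp (-Complex.I * (m : ℂ) * (ω₀ : ℂ) * ((t : ℝ) : ℂ)) =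
        ∑ t ∈ ν.support,
        ν t * Complex.exp (Complex.I * (a : ℂ) * ((t : ℝ) : ℂ) ^ 2 / (2 * (b : ℂ))) *
          Complex.exp (-Complex.I * (m : ℂ) * (ω₀ : ℂ) * ((t : ℝ) : ℂ)) := by
      refine (Finset.sum_subset (Finset.subset_union_right) fun t _ ht => ?_).symm
      rw [Finsupp.notMem_support_iff.mp ht, zero_mul, zero_mul]
    rw [hsumμ, hsumν, h m hmabs, sub_self]

  have hcard : S.card ≤ 2 * K + 1 := by
    have h1 := Finset.card_union_le μ.support ν.support
    have h2 : S.card = (μ.support ∪ ν.support).card := by rw [hS]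
    omega
  have hzero := vand S z w (2 * K) hcard hinj hmom
  ext t
  by_cases ht : t ∈ S
  · have := hzero t ht
    rw [hw] at this
    rcases mul_eq_zero.mp this with h1 | h2
    · rcases mul_eq_zero.mp h1 with h3 | h4
      · exact sub_eq_zero.mp h3
      · exact absurd h4 (Complex.exp_ne_zero _)
    · exact absurd h2 (Complex.exp_ne_zero _)
  · rw [hS, Finset.mem_union] at ht
    push_neg at ht
    rw [Finsupp.notMem_support_iff.mp ht.1, Finsupp.notMem_support_iff.mp ht.2]
end

section
/- Let Λ = [[a,b],[c,d]] be a real 2×2 matrix with ad − bc = 1 and b > 0. Then for every Schwartz function f : ℝ → ℂ and every t ∈ ℝ, the inversion formula f(t) = ∫_ℝ (𝓛_Λ f)(ω) · k_Λ(t,ω) dω holds, where the integral converges absolutely. -/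
/-!
Writing `ξ = ω / (2πb)`, the kernel factors as
`k_Λ(t, ω) = (√(-2πib))⁻¹ · e^{-i a t²/(2b)} · e^{-i d ω²/(2b)} · e^{2πi t ξ}`.
Hence `𝓛_Λ f(ω)` is, up to the unimodular chirp `e^{i d ω²/(2b)}` and a constant, the Fourier
transform at `ξ` of the Schwartz function `g(x) = e^{i a x²/(2b)} f(x)`. In the product
`𝓛_Λ f(ω) · k_Λ(t, ω)` the `ω`-chirps cancel and the constants combine to `|√(-2πib)|⁻² = (2πb)⁻¹`,
leaving `(2πb)⁻¹ e^{-i a t²/(2b)} e^{2πi t ξ} 𝓕g(ξ)`. The substitution `ω = 2πb ξ` and Fourier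
inversion for `g` turn its integral into `e^{-i a t²/(2b)} g(t) = f(t)`.
-/

open MeasureTheory Complex

noncomputable section

/-- The LCT kernel `k_Λ(t, ω) = (1/√(-2πib)) exp(-(i/(2b))(a t² + d ω² - 2 ω t))`,
where `√` is the principal branch of the complex square root. -/
def lctKernel (a b d : ℝ) (t ω : ℝ) : ℂ :=
  (((-2 : ℂ) * (Real.pi : ℂ) * Complex.I * (b : ℂ)) ^ ((1 : ℂ) / 2))⁻¹ *
    Complex.exp (-(Complex.I / (2 * (b : ℂ))) *
      ((a : ℂ) * (t : ℂ) ^ 2 + (d : ℂ) * (ω : ℂ) ^ 2 - 2 * (ω : ℂ) * (t : ℂ)))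

/-- The Linear Canonical Transform `(𝓛_Λ f)(ω) = ∫ f(t) conj (k_Λ(t,ω)) dt`. -/
def lct (a b d : ℝ) (f : ℝ → ℂ) (ω : ℝ) : ℂ :=
  ∫ t : ℝ, f t * (starRingEnd ℂ) (lctKernel a b d t ω)

open scoped FourierTransform Real ComplexConjugate SchwartzMap

def chirp (c x : ℝ) : ℂ := cexp (I * (c * x ^ 2 : ℝ))

lemma conj_chirp (c x : ℝ) : conj (chirp c x) = chirp (-c) x := by
  rw [chirp, chirp, ← exp_conj]
  simp

lemma chirp_mul_chirp_neg (c x : ℝ) : chirp c x * chirp (-c) x = 1 := by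
  rw [chirp, chirp, ← exp_add]
  simp

lemma iteratedDeriv_cexp_I_mul_ofReal (n : ℕ) :
    iteratedDeriv n (fun y : ℝ => cexp (I * y)) = fun y : ℝ => I ^ n * cexp (I * y) := by
  induction n with
  | zero => simp
  | succ n ih =>
    ext y
    have h : HasDerivAt (fun y : ℝ => I ^ n * cexp (I * y)) (I ^ n * (cexp (I * y) * I)) y := by
      simpa using (((hasDerivAt_id (y : ℂ)).const_mul I).comp_ofReal.cexp).const_mul (I ^ n)
    rw [iteratedDeriv_succ, ih, h.deriv, pow_succ]
    ring

lemma hasTemperateGrowth_cexp_I_mul_ofReal :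
    Function.HasTemperateGrowth (fun y : ℝ => cexp (I * y)) := by
  refine ⟨(contDiff_const.mul ofRealCLM.contDiff).cexp, fun n => ⟨0, 1, fun y => ?_⟩⟩
  rw [norm_iteratedFDeriv_eq_norm_iteratedDeriv, iteratedDeriv_cexp_I_mul_ofReal]
  simp [mul_comm I]

lemma hasTemperateGrowth_chirp (c : ℝ) : (chirp c).HasTemperateGrowth :=
  hasTemperateGrowth_cexp_I_mul_ofReal.comp
    (by fun_prop : (fun x : ℝ => c * x ^ 2).HasTemperateGrowth)

lemma normSq_cpow_one_div_two (z : ℂ) : normSq (z ^ (1 / 2 : ℂ)) = ‖z‖ := by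
  rw [normSq_eq_norm_sq, ← norm_pow, one_div, cpow_ofNat_inv_pow]

def lctNormalizer (b : ℝ) : ℂ := ((-2 : ℂ) * π * I * b) ^ (1 / 2 : ℂ)

lemma normSq_lctNormalizer {b : ℝ} (hb : 0 < b) : normSq (lctNormalizer b) = 2 * π * b := by
  rw [lctNormalizer, normSq_cpow_one_div_two]
  simp [abs_of_pos Real.pi_pos, abs_of_pos hb]

lemma Real.integrable_fourierChar_smul {F : ℝ → ℂ} (hF : Integrable F) (t : ℝ) :
    Integrable (fun ξ : ℝ => 𝐞 (t * ξ) • F ξ) := by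
  simpa using (Real.fourierIntegral_convergent_iff (-t)).2 hF

lemma SchwartzMap.integral_fourierChar_smul_fourier (g : 𝓢(ℝ, ℂ)) (t : ℝ) :
    ∫ ξ : ℝ, 𝐞 (t * ξ) • 𝓕 (⇑g) ξ = g t := by
  have h := congrArg (· t) (FourierTransform.fourierInv_fourier_eq g : 𝓕⁻ (𝓕 g : 𝓢(ℝ, ℂ)) = g)
  simp only [SchwartzMap.fourierInv_coe, SchwartzMap.fourier_coe, Real.fourierInv_eq] at h
  simpa using h

section Kernel

variable {a b d : ℝ}

lemma lctKernel_eq (hb : b ≠ 0) (t ω : ℝ) :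
    lctKernel a b d t ω = (lctNormalizer b)⁻¹ *
      (chirp (-(a / (2 * b))) t * chirp (-(d / (2 * b))) ω * 𝐞 (t * (ω / (2 * π * b)))) := by
  rw [lctKernel, lctNormalizer, Real.fourierChar_apply, chirp, chirp, ← exp_add, ← exp_add]
  congr 2
  push_cast
  field_simp [hb]
  ring

lemma conj_lctKernel (hb : b ≠ 0) (t ω : ℝ) :
    conj (lctKernel a b d t ω) = conj (lctNormalizer b)⁻¹ *
      (chirp (d / (2 * b)) ω * 𝐞 (-(t * (ω / (2 * π * b)))) * chirp (a / (2 * b)) t) := by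
  rw [lctKernel_eq hb]
  simp only [map_mul, conj_chirp, ← Circle.coe_inv_eq_conj, ← AddChar.map_neg_eq_inv, neg_neg]
  ring

lemma lct_eq_fourier (hb : b ≠ 0) (f : ℝ → ℂ) (ω : ℝ) :
    lct a b d f ω = conj (lctNormalizer b)⁻¹ * chirp (d / (2 * b)) ω *
      𝓕 (fun x => chirp (a / (2 * b)) x * f x) (ω / (2 * π * b)) := by
  simp only [lct, conj_lctKernel hb, Real.fourier_real_eq, Circle.smul_def, smul_eq_mul,
    ← integral_const_mul]
  congr 1 with x
  ring

lemma lct_mul_lctKernel (hb : 0 < b) (f : ℝ → ℂ) (t ω : ℝ) :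
    lct a b d f ω * lctKernel a b d t ω = ((2 * π * b : ℂ)⁻¹ * chirp (-(a / (2 * b))) t) *
      (𝐞 (t * (ω / (2 * π * b))) • 𝓕 (fun x => chirp (a / (2 * b)) x * f x) (ω / (2 * π * b))) := by
  have hnorm : conj (lctNormalizer b)⁻¹ * (lctNormalizer b)⁻¹ = (2 * π * b : ℂ)⁻¹ := by
    rw [map_inv₀, ← mul_inv, mul_comm, mul_conj, normSq_lctNormalizer hb]
    push_cast
    rfl
  rw [lct_eq_fourier hb.ne', lctKernel_eq hb.ne', Circle.smul_def, smul_eq_mul]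
  set F := 𝓕 (fun x => chirp (a / (2 * b)) x * f x) (ω / (2 * π * b))
  linear_combination (F * chirp (-(a / (2 * b))) t * 𝐞 (t * (ω / (2 * π * b))) *
      chirp (d / (2 * b)) ω * chirp (-(d / (2 * b))) ω) * hnorm +
    (F * chirp (-(a / (2 * b))) t * 𝐞 (t * (ω / (2 * π * b))) * (2 * π * b : ℂ)⁻¹) *
      chirp_mul_chirp_neg (d / (2 * b)) ω

end Kernel

theorem lct_inversion_general (a b d : ℝ) (hb : 0 < b)
    (f : SchwartzMap ℝ ℂ) (t : ℝ) :
    Integrable (fun ω : ℝ => lct a b d (fun x => f x) ω * lctKernel a b d t ω) ∧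
    f t = ∫ ω : ℝ, lct a b d (fun x => f x) ω * lctKernel a b d t ω := by
  set g : 𝓢(ℝ, ℂ) := SchwartzMap.smulLeftCLM ℂ (chirp (a / (2 * b))) f
  have hg : (fun x => chirp (a / (2 * b)) x * f x) = ⇑g := by
    ext x
    simp [g, hasTemperateGrowth_chirp]
  have hs : 0 < 2 * π * b := by positivity
  have hs' : (2 * π * b : ℂ) ≠ 0 := by exact_mod_cast hs.ne'
  simp only [lct_mul_lctKernel hb, hg]
  refine ⟨((Real.integrable_fourierChar_smul (𝓕 g : 𝓢(ℝ, ℂ)).integrable t).comp_div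
    hs.ne').const_mul _, ?_⟩
  rw [integral_const_mul, Measure.integral_comp_div (fun ξ => 𝐞 (t * ξ) • 𝓕 (⇑g) ξ),
    g.integral_fourierChar_smul_fourier, abs_of_pos hs, ← congrFun hg t, Complex.real_smul]
  push_cast
  linear_combination (-(chirp (a / (2 * b)) t * chirp (-(a / (2 * b))) t * f t)) *
      inv_mul_cancel₀ hs' - f t * chirp_mul_chirp_neg (a / (2 * b)) t

/-- **LCT inversion formula.**  For `Λ = [[a,b],[c,d]]` with `ad - bc = 1` and `b > 0`,
every Schwartz function satisfies `f(t) = ∫ (𝓛_Λ f)(ω) k_Λ(t,ω) dω`, the integral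
converging absolutely. -/
theorem lct_inversion (a b c d : ℝ) (hdet : a * d - b * c = 1) (hb : 0 < b)
    (f : SchwartzMap ℝ ℂ) (t : ℝ) :
    Integrable (fun ω : ℝ => lct a b d (fun x => f x) ω * lctKernel a b d t ω) ∧
    f t = ∫ ω : ℝ, lct a b d (fun x => f x) ω * lctKernel a b d t ω :=
  lct_inversion_general a b d hb f t
end
end

section
/- Let Λ = [[a,b],[c,d]] be a real 2×2 matrix with ad − bc = 1 and b > 0, let τ > 0, ω₀ = 2π/τ and κ = √(2πb/τ). Then the family of functions e_n(t) = κ · k_Λ(t, n ω₀ b), indexed by n ∈ ℤ and restricted to the interval [0,τ], is a complete orthonormal system (a Hilbert basis) of L²([0,τ]; ℂ); i.e., ∫_0^τ e_n(t) conj(e_m(t)) dt = 1 if n = m and 0 otherwise, and the closed linear span of {e_n : n ∈ ℤ} is all of L²([0,τ]; ℂ). (This is the basis underlying the Linear Canonical Series expansion.) -/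
/-!
The kernel factors as `k_Λ(t, n ω₀ b) = k_Λ(0, n ω₀ b) · exp(-i a t² / (2b)) · exp(i n ω₀ t)`:
a constant of modulus `(2πb)^(-1/2)`, a unimodular chirp that does not depend on `n`, and the
`n`-th Fourier character of period `τ`. Multiplication by a unimodular function is unitary on
`L²`, and unimodular scalars do not affect orthonormality, so `e_n` is, up to such factors, the
normalized Fourier basis `τ^(-1/2) exp(i n ω₀ t)`. Orthonormality is that of the Fourier
characters, and completeness is Parseval's identity on `[0, τ]` applied to `conj(chirp) · f`.
-/

open MeasureTheory Complex

noncomputable section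

open Set ComplexConjugate Real

theorem intervalIntegral_fourier_mul_conj_fourier {a b : ℝ} (hab : a < b) (n m : ℤ) :
    ∫ t in a..b, fourier n (t : AddCircle (b - a)) * conj (fourier m (t : AddCircle (b - a))) =
      if n = m then ((b - a : ℝ) : ℂ) else 0 := by
  have := Fact.mk (sub_pos.mpr hab)
  have h := fourierCoeff_eq_intervalIntegral (T := b - a) (fourier n) m a
  rw [fourierCoeff_fourier, add_sub_cancel] at h
  simp_rw [fourier_neg, smul_eq_mul, mul_comm (conj _)] at h
  rw [one_div, eq_inv_smul_iff₀ (sub_pos.mpr hab).ne', Pi.single_apply] at h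
  rw [← h]
  by_cases hnm : n = m <;> simp [hnm, eq_comm, Complex.real_smul]

theorem ae_eq_zero_of_fourierCoeffOn_eq_zero {a b : ℝ} (hab : a < b) {f : ℝ → ℂ}
    (hf : MemLp f 2 (volume.restrict (Ioc a b))) (hcoeff : ∀ n, fourierCoeffOn hab f n = 0) :
    f =ᵐ[volume.restrict (Ioc a b)] 0 := by
  have hsum := hasSum_sq_fourierCoeffOn hab hf
  simp only [hcoeff, norm_zero, ne_eq, OfNat.ofNat_ne_zero, not_false_eq_true, zero_pow] at hsum
  have h0 := (hasSum_zero.unique hsum).symm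
  rw [smul_eq_zero, intervalIntegral.integral_of_le hab.le] at h0
  have h1 : ∫ x in Ioc a b, ‖f x‖ ^ 2 = 0 := h0.resolve_left (by simp [sub_eq_zero, hab.ne'])
  rw [integral_eq_zero_iff_of_nonneg (fun x => by positivity)
    (hf.integrable_norm_pow two_ne_zero)] at h1
  filter_upwards [h1] with x hx
  simpa using hx

section ModulatedFourier

variable {a b : ℝ} {g : ℝ → ℂ} {c : ℤ → ℂ} {e : ℤ → ℝ → ℂ}

theorem setIntegral_mul_conj_of_eq_mul_fourier (hab : a < b) (hg : ∀ t, ‖g t‖ = 1)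
    (hc : ∀ n, ‖c n‖ = (√(b - a))⁻¹)
    (he : ∀ n t, e n t = c n * g t * fourier n (t : AddCircle (b - a))) (n m : ℤ) :
    ∫ t in Ioc a b, e n t * conj (e m t) = if n = m then 1 else 0 := by
  have hprod : ∀ t, e n t * conj (e m t) = c n * conj (c m) *
      (fourier n (t : AddCircle (b - a)) * conj (fourier m (t : AddCircle (b - a)))) := by
    intro t
    have hgt : g t * conj (g t) = 1 := by simp [mul_conj', hg]
    rw [he, he, map_mul, map_mul]
    linear_combination c n * conj (c m) * fourier n (t : AddCircle (b - a)) *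
      conj (fourier m (t : AddCircle (b - a))) * hgt
  simp_rw [hprod]
  rw [integral_const_mul, ← intervalIntegral.integral_of_le hab.le,
    intervalIntegral_fourier_mul_conj_fourier hab]
  split_ifs with hnm
  · subst hnm
    rw [mul_conj', hc, ← ofReal_pow, ← ofReal_mul, inv_pow, sq_sqrt (sub_pos.mpr hab).le,
      inv_mul_cancel₀ (sub_pos.mpr hab).ne', ofReal_one]
  · rw [mul_zero]

theorem memLp_of_eq_mul_fourier (hgm : Measurable g) (hg : ∀ t, ‖g t‖ = 1)
    (he : ∀ n t, e n t = c n * g t * fourier n (t : AddCircle (b - a))) (n : ℤ) :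
    MemLp (e n) 2 (volume.restrict (Ioc a b)) := by
  rw [show e n = fun t => c n * g t * fourier n (t : AddCircle (b - a)) from funext (he n)]
  refine MemLp.of_bound (by fun_prop) ‖c n‖ (ae_of_all _ fun t => ?_)
  rw [norm_mul, norm_mul, hg, fourier_apply, Circle.norm_coe, mul_one, mul_one]

theorem ae_eq_zero_of_integral_conj_mul_eq_zero (hab : a < b) (hgm : Measurable g)
    (hg : ∀ t, ‖g t‖ = 1) (hc : ∀ n, c n ≠ 0)
    (he : ∀ n t, e n t = c n * g t * fourier n (t : AddCircle (b - a))) {f : ℝ → ℂ}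
    (hf : MemLp f 2 (volume.restrict (Ioc a b)))
    (horth : ∀ n, ∫ t in Ioc a b, conj (e n t) * f t = 0) :
    f =ᵐ[volume.restrict (Ioc a b)] 0 := by
  set h : ℝ → ℂ := fun t => conj (g t) * f t
  have hh : MemLp h 2 (volume.restrict (Ioc a b)) :=
    hf.of_le ((continuous_conj.measurable.comp hgm).aestronglyMeasurable.mul hf.1)
      (ae_of_all _ fun t => by simp [h, hg])
  have hcoeff : ∀ n, fourierCoeffOn hab h n = 0 := by
    intro n
    have hint : ∫ t in Ioc a b, conj (e n t) * f t =
        conj (c n) * ∫ t in a..b, fourier (-n) (t : AddCircle (b - a)) • h t := by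
      rw [intervalIntegral.integral_of_le hab.le, ← integral_const_mul]
      congr 1 with t
      rw [he, fourier_neg, smul_eq_mul, map_mul, map_mul]
      ring
    rw [horth, zero_eq_mul, map_eq_zero] at hint
    rw [fourierCoeffOn_eq_integral, hint.resolve_left (hc n), smul_zero]
  filter_upwards [ae_eq_zero_of_fourierCoeffOn_eq_zero hab hh hcoeff] with t ht
  have hgt : g t * conj (g t) = 1 := by simp [mul_conj', hg]
  calc f t = g t * h t := by rw [← one_mul (f t), ← hgt, mul_assoc]
    _ = 0 := by rw [ht, Pi.zero_apply, mul_zero]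

theorem exists_hilbertBasis_of_eq_mul_fourier (hab : a < b) (hgm : Measurable g)
    (hg : ∀ t, ‖g t‖ = 1) (hc : ∀ n, ‖c n‖ = (√(b - a))⁻¹)
    (he : ∀ n t, e n t = c n * g t * fourier n (t : AddCircle (b - a))) :
    ∃ B : HilbertBasis ℤ ℂ (Lp ℂ 2 (volume.restrict (Ioc a b))),
      ∀ n, ⇑(B n) =ᵐ[volume.restrict (Ioc a b)] e n := by
  set v : ℤ → Lp ℂ 2 (volume.restrict (Ioc a b)) :=
    fun n => (memLp_of_eq_mul_fourier hgm hg he n).toLp (e n)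
  have hv : ∀ n, v n =ᵐ[volume.restrict (Ioc a b)] e n := fun n => MemLp.coeFn_toLp _
  have hinner : ∀ n (f : Lp ℂ 2 (volume.restrict (Ioc a b))),
      inner ℂ (v n) f = ∫ t in Ioc a b, conj (e n t) * f t := by
    intro n f
    rw [L2.inner_def]
    refine integral_congr_ae ?_
    filter_upwards [hv n] with t ht
    rw [RCLike.inner_apply, ht, mul_comm]
  have horth : Orthonormal ℂ v := by
    rw [orthonormal_iff_ite]
    intro n m
    calc inner ℂ (v n) (v m) = ∫ t in Ioc a b, e m t * conj (e n t) := by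
          rw [hinner]
          refine integral_congr_ae ?_
          filter_upwards [hv m] with t ht
          rw [ht, mul_comm]
      _ = if n = m then 1 else 0 := by
          rw [setIntegral_mul_conj_of_eq_mul_fourier hab hg hc he]
          exact if_congr eq_comm rfl rfl
  have hc0 : ∀ n, c n ≠ 0 := fun n => by
    rw [← norm_ne_zero_iff, hc]
    exact inv_ne_zero (sqrt_pos.mpr (sub_pos.mpr hab)).ne'
  have hsp : (Submodule.span ℂ (range v))ᗮ = ⊥ := by
    refine (Submodule.eq_bot_iff _).mpr fun f hf => Lp.ext ?_
    refine (ae_eq_zero_of_integral_conj_mul_eq_zero hab hgm hg hc0 he (Lp.memLp f)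
      fun n => ?_).trans (Lp.coeFn_zero ℂ 2 _).symm
    rw [← hinner]
    exact Submodule.inner_right_of_mem_orthogonal (Submodule.subset_span (mem_range_self n)) hf
  exact ⟨HilbertBasis.mkOfOrthogonalEqBot horth hsp, fun n => by simpa using hv n⟩

end ModulatedFourier

theorem lctKernel_eq_mul_chirp (a d t ω : ℝ) {b : ℝ} (hb : b ≠ 0) :
    lctKernel a b d t ω =
      lctKernel a b d 0 ω * exp (((-(a / (2 * b)) * t ^ 2 : ℝ) : ℂ) * I) *
        exp (((ω * t / b : ℝ) : ℂ) * I) := by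
  have hb' : (b : ℂ) ≠ 0 := ofReal_ne_zero.mpr hb
  simp only [lctKernel, mul_assoc, ← Complex.exp_add]
  congr 2
  push_cast
  field_simp
  ring

theorem norm_lctKernel (a d t ω : ℝ) {b : ℝ} (hb : b ≠ 0) :
    ‖lctKernel a b d t ω‖ = (√(2 * π * |b|))⁻¹ := by
  have harg : -(I / (2 * (b : ℂ))) *
      ((a : ℂ) * (t : ℂ) ^ 2 + (d : ℂ) * (ω : ℂ) ^ 2 - 2 * (ω : ℂ) * (t : ℂ)) =
        ((-(a * t ^ 2 + d * ω ^ 2 - 2 * ω * t) / (2 * b) : ℝ) : ℂ) * I := by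
    have hb' : (b : ℂ) ≠ 0 := ofReal_ne_zero.mpr hb
    push_cast
    field_simp
  have hz : (-2 : ℂ) * π * I * b ≠ 0 := by simp [pi_ne_zero, hb]
  unfold lctKernel
  rw [harg, norm_mul, norm_exp_ofReal_mul_I, mul_one, norm_inv,
    norm_cpow_of_ne_zero hz, sqrt_eq_rpow]
  simp [abs_of_pos pi_pos]

theorem lcs_complete_orthonormal_system_general (a b d : ℝ) (hb : 0 < b)
    (τ : ℝ) (hτ : 0 < τ) (ω₀ κ : ℝ)
    (hω₀ : ω₀ = 2 * Real.pi / τ) (hκ : κ = Real.sqrt (2 * Real.pi * b / τ))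
    (e : ℤ → ℝ → ℂ)
    (he : ∀ (n : ℤ) (t : ℝ), e n t = (κ : ℂ) * lctKernel a b d t ((n : ℝ) * ω₀ * b)) :
    (∀ n m : ℤ, (∫ t in Set.Icc (0 : ℝ) τ, e n t * (starRingEnd ℂ) (e m t)) =
      if n = m then 1 else 0) ∧
    ∃ B : HilbertBasis ℤ ℂ (Lp ℂ 2 (volume.restrict (Set.Icc (0 : ℝ) τ))),
      ∀ n : ℤ, ⇑(B n) =ᵐ[volume.restrict (Set.Icc (0 : ℝ) τ)] e n := by
  set c : ℤ → ℂ := fun n => κ * lctKernel a b d 0 (n * ω₀ * b)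
  set g : ℝ → ℂ := fun t => exp (((-(a / (2 * b)) * t ^ 2 : ℝ) : ℂ) * I)
  have hg : ∀ t, ‖g t‖ = 1 := fun t => norm_exp_ofReal_mul_I _
  have hc : ∀ n, ‖c n‖ = (√(τ - 0))⁻¹ := by
    intro n
    rw [norm_mul, norm_lctKernel _ _ _ _ hb.ne', abs_of_pos hb, norm_real, norm_of_nonneg
      (hκ ▸ sqrt_nonneg _), hκ, sqrt_div' _ hτ.le, sub_zero]
    field_simp
  have hfactor : ∀ n t, e n t = c n * g t * fourier n (t : AddCircle (τ - 0)) := by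
    intro n t
    have hphase :
        ((n * ω₀ * b * t / b : ℝ) : ℂ) * I =
          2 * π * I * n * t / ((τ - 0 : ℝ) : ℂ) := by
      have hτ' : (τ : ℂ) ≠ 0 := ofReal_ne_zero.mpr hτ.ne'
      have hb' : (b : ℂ) ≠ 0 := ofReal_ne_zero.mpr hb.ne'
      rw [hω₀, sub_zero]
      push_cast
      field_simp
    rw [he, lctKernel_eq_mul_chirp _ _ _ _ hb.ne', fourier_coe_apply, hphase]
    ring
  rw [Measure.restrict_congr_set Ioc_ae_eq_Icc.symm]
  exact ⟨setIntegral_mul_conj_of_eq_mul_fourier hτ hg hc hfactor,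
    exists_hilbertBasis_of_eq_mul_fourier hτ (by fun_prop) hg hc hfactor⟩

/-- **The Linear Canonical Series basis.**  The family `e_n(t) = κ k_Λ(t, n ω₀ b)`,
`n ∈ ℤ`, restricted to `[0, τ]`, is orthonormal in `L²([0,τ]; ℂ)` and is a complete
orthonormal system (a Hilbert basis) of that space. -/
theorem lcs_complete_orthonormal_system (a b c d : ℝ) (hdet : a * d - b * c = 1) (hb : 0 < b)
    (τ : ℝ) (hτ : 0 < τ) (ω₀ κ : ℝ)
    (hω₀ : ω₀ = 2 * Real.pi / τ) (hκ : κ = Real.sqrt (2 * Real.pi * b / τ))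
    (e : ℤ → ℝ → ℂ)
    (he : ∀ (n : ℤ) (t : ℝ), e n t = (κ : ℂ) * lctKernel a b d t ((n : ℝ) * ω₀ * b)) :
    (∀ n m : ℤ, (∫ t in Set.Icc (0 : ℝ) τ, e n t * (starRingEnd ℂ) (e m t)) =
      if n = m then 1 else 0) ∧
    ∃ B : HilbertBasis ℤ ℂ (Lp ℂ 2 (volume.restrict (Set.Icc (0 : ℝ) τ))),
      ∀ n : ℤ, ⇑(B n) =ᵐ[volume.restrict (Set.Icc (0 : ℝ) τ)] e n :=
  lcs_complete_orthonormal_system_general a b d hb τ hτ ω₀ κ hω₀ hκ e he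
end
end

section
/- Let Λ = [[a,b],[c,d]] be a real 2×2 matrix with ad − bc = 1 and b > 0, let Ω > 0, and define φ_LP(t) = (Ω/b) · e^{−i a t²/(2b)} · sinc(Ω t / b). Then φ_LP is bandlimited in phase space: for every ω ∈ ℝ with |ω| ≠ πΩ, the improper integral lim_{R→∞} ∫_{−R}^{R} φ_LP(t) · conj(k_Λ(t,ω)) dt exists and equals e^{i d ω²/(2b)}/√(2πib) when |ω| < πΩ, and equals 0 when |ω| > πΩ. -/
open Complex Filter

noncomputable section

/-- The normalized sinc function: `sinc x = sin (π x) / (π x)` for `x ≠ 0`, `sinc 0 = 1`. -/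
def sinc (x : ℝ) : ℝ :=
  if x = 0 then 1 else Real.sin (Real.pi * x) / (Real.pi * x)

/-- The low-pass chirp-modulated sinc filter `φ_LP(t) = (Ω/b) e^{-i a t²/(2b)} sinc (Ω t/b)`. -/
def phiLP (a b Ω : ℝ) (t : ℝ) : ℂ :=
  ((Ω / b : ℝ) : ℂ) * Complex.exp (-Complex.I * (a : ℂ) * (t : ℂ) ^ 2 / (2 * (b : ℂ))) *
    ((sinc (Ω * t / b) : ℝ) : ℂ)

/-!
After the two chirps cancel, the integrand is the constant `e^{i d ω²/(2b)} / (π √(2πib))`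
times `β sinc(β t) e^{-iγt}`, where `β = πΩ/b`, `γ = ω/b` and `sinc` is now Mathlib's
unnormalized `Real.sinc`.
Folding `[-R, R]` onto `[0, R]` and using `2 sin(βt) cos(γt) = sin((β+γ)t) + sin((β-γ)t)`
reduces the limit to two Dirichlet integrals `∫₀^∞ sin(αt)/t dt = sign(α) π/2`; the signs of
`β ± γ` agree exactly when `|ω| < πΩ`. The Dirichlet integral itself comes from
`1/t = ∫₀^∞ e^{-ts} ds` and Fubini on `(0, R] × (0, ∞)`.
-/

open MeasureTheory Set Topology ComplexConjugate
open scoped Real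

namespace Real

lemma sinc_mul_self (x : ℝ) : sinc x * x = sin x := by
  rcases eq_or_ne x 0 with rfl | hx
  · simp
  · rw [sinc_of_ne_zero hx, div_mul_cancel₀ _ hx]

lemma integral_exp_neg_mul_mul_sin (s R : ℝ) :
    ∫ t in 0..R, exp (-t * s) * sin t =
      (1 - exp (-R * s) * (cos R + s * sin R)) / (1 + s ^ 2) := by
  have hs : 1 + s ^ 2 ≠ 0 := by positivity
  have hderiv (t : ℝ) : HasDerivAt (fun t => -(exp (-t * s) * (cos t + s * sin t)) / (1 + s ^ 2))
      (exp (-t * s) * sin t) t := by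
    refine ((((hasDerivAt_id t).neg.mul_const s).exp.mul
      ((hasDerivAt_cos t).add ((hasDerivAt_sin t).const_mul s))).neg.div_const _).congr_deriv ?_
    simp only [Pi.neg_apply, id, Pi.add_apply]
    field_simp
    ring
  rw [intervalIntegral.integral_eq_sub_of_hasDerivAt (fun t _ => hderiv t)
    (Continuous.intervalIntegrable (by fun_prop) _ _)]
  simp
  ring

lemma integral_exp_neg_mul_Ioi_zero {t : ℝ} (ht : 0 < t) :
    ∫ s in Ioi 0, exp (-t * s) = t⁻¹ := by
  rw [integral_exp_mul_Ioi (neg_neg_of_pos ht)]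
  simp

lemma abs_cos_add_mul_sin_le (R s : ℝ) : |cos R + s * sin R| ≤ 1 + s ^ 2 :=
  abs_le.mpr <| abs_le_of_sq_le_sq' (by
    nlinarith [sin_sq_add_cos_sq R, sq_nonneg (s * cos R - sin R), sq_nonneg s]) (by positivity)

lemma norm_exp_neg_mul_mul_cos_add_mul_sin_div_le (R s : ℝ) :
    ‖exp (-R * s) * (cos R + s * sin R) / (1 + s ^ 2)‖ ≤ exp (-R * s) := by
  rw [norm_div, norm_mul, norm_of_nonneg (exp_pos _).le,
    norm_of_nonneg (by positivity : (0 : ℝ) ≤ 1 + s ^ 2), div_le_iff₀ (by positivity)]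
  exact mul_le_mul_of_nonneg_left (abs_cos_add_mul_sin_le R s) (exp_pos _).le

lemma integral_sinc_eq_pi_div_two_sub {R : ℝ} (hR : 0 < R) :
    ∫ t in 0..R, sinc t =
      π / 2 - ∫ s in Ioi 0, exp (-R * s) * (cos R + s * sin R) / (1 + s ^ 2) := by
  have hF : Integrable (fun p : ℝ × ℝ => exp (-p.1 * p.2) * sin p.1)
      ((volume.restrict (Ioc 0 R)).prod (volume.restrict (Ioi 0))) := by
    rw [integrable_prod_iff (by fun_prop)]
    refine ⟨?_, ?_⟩
    · filter_upwards [ae_restrict_mem measurableSet_Ioc] with t ht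
      exact (exp_neg_integrableOn_Ioi 0 ht.1).mul_const _
    · refine (continuous_sinc.abs.integrableOn_Icc.mono_set Ioc_subset_Icc_self).congr ?_
      filter_upwards [ae_restrict_mem measurableSet_Ioc] with t ht
      simp only [norm_mul, norm_of_nonneg (exp_pos _).le, integral_mul_const,
        integral_exp_neg_mul_Ioi_zero ht.1, sinc_of_ne_zero ht.1.ne', abs_div, abs_of_pos ht.1]
      rw [Real.norm_eq_abs]; ring
  have hrem : IntegrableOn (fun s => exp (-R * s) * (cos R + s * sin R) / (1 + s ^ 2)) (Ioi 0) :=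
    (exp_neg_integrableOn_Ioi 0 hR).mono'
      ((Continuous.div (by fun_prop) (by fun_prop) fun s => by positivity).aestronglyMeasurable)
      (Eventually.of_forall (norm_exp_neg_mul_mul_cos_add_mul_sin_div_le R))
  have hswap := integral_integral_swap (f := fun t s => exp (-t * s) * sin t) hF
  rw [intervalIntegral.integral_of_le hR.le]
  calc ∫ t in Ioc 0 R, sinc t
      = ∫ t in Ioc 0 R, ∫ s in Ioi 0, exp (-t * s) * sin t := by
        refine setIntegral_congr_fun measurableSet_Ioc fun t ht => ?_
        rw [integral_mul_const, integral_exp_neg_mul_Ioi_zero ht.1, sinc_of_ne_zero ht.1.ne',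
          inv_mul_eq_div]
    _ = ∫ s in Ioi 0, ((1 + s ^ 2)⁻¹ - exp (-R * s) * (cos R + s * sin R) / (1 + s ^ 2)) := by
        rw [hswap]
        refine setIntegral_congr_fun measurableSet_Ioi fun s _ => ?_
        rw [← intervalIntegral.integral_of_le hR.le, integral_exp_neg_mul_mul_sin, sub_div,
          one_div]
    _ = _ := by
        rw [integral_sub integrable_inv_one_add_sq.integrableOn hrem, integral_Ioi_inv_one_add_sq,
          arctan_zero, sub_zero]

theorem tendsto_integral_sinc_atTop :
    Tendsto (fun R => ∫ t in 0..R, sinc t) atTop (𝓝 (π / 2)) := by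
  have hrem : Tendsto (fun R => ∫ s in Ioi 0, exp (-R * s) * (cos R + s * sin R) / (1 + s ^ 2))
      atTop (𝓝 0) := by
    refine squeeze_zero_norm' ?_ tendsto_inv_atTop_zero
    filter_upwards [eventually_gt_atTop 0] with R hR
    rw [← integral_exp_neg_mul_Ioi_zero hR]
    exact norm_integral_le_of_norm_le (exp_neg_integrableOn_Ioi 0 hR)
      (Eventually.of_forall (norm_exp_neg_mul_mul_cos_add_mul_sin_div_le R))
  have hlim := (tendsto_const_nhds (x := π / 2)).sub hrem
  rw [sub_zero] at hlim
  refine hlim.congr' ?_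
  filter_upwards [eventually_gt_atTop 0] with R hR
  exact (integral_sinc_eq_pi_div_two_sub hR).symm

theorem tendsto_integral_sinc_atBot :
    Tendsto (fun R => ∫ t in 0..R, sinc t) atBot (𝓝 (-(π / 2))) := by
  have hodd (R : ℝ) : ∫ t in 0..-R, sinc t = -∫ t in 0..R, sinc t := by
    rw [intervalIntegral.integral_symm, ← neg_zero, ← intervalIntegral.integral_comp_neg]
    simp_rw [sinc_neg, neg_zero]
  refine (tendsto_integral_sinc_atTop.neg.comp tendsto_neg_atBot_atTop).congr fun R => ?_
  rw [Function.comp_apply, hodd, neg_neg]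

lemma continuous_mul_sinc_mul (β : ℝ) : Continuous fun t => β * sinc (β * t) :=
  continuous_const.mul (continuous_sinc.comp (continuous_const.mul continuous_id))

theorem tendsto_integral_mul_sinc_mul (β : ℝ) :
    Tendsto (fun R => ∫ t in 0..R, β * sinc (β * t)) atTop (𝓝 (sign β * (π / 2))) := by
  have hscale (R : ℝ) : ∫ t in 0..R, β * sinc (β * t) = ∫ t in 0..β * R, sinc t := by
    simp
  simp_rw [hscale]
  rcases lt_trichotomy β 0 with hβ | rfl | hβ
  · rw [sign_of_neg hβ, neg_one_mul]
    exact tendsto_integral_sinc_atBot.comp (tendsto_id.const_mul_atTop_of_neg hβ)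
  · simp
  · rw [sign_of_pos hβ, one_mul]
    exact tendsto_integral_sinc_atTop.comp (tendsto_id.const_mul_atTop hβ)

lemma two_mul_mul_sinc_mul_cos (β γ t : ℝ) :
    2 * (β * sinc (β * t)) * cos (γ * t) =
      (β + γ) * sinc ((β + γ) * t) + (β - γ) * sinc ((β - γ) * t) := by
  rcases eq_or_ne t 0 with rfl | ht
  · simp; ring
  have hsin (x : ℝ) : x * sinc (x * t) = sin (x * t) / t := by
    rw [eq_div_iff ht, ← sinc_mul_self]
    ring
  rw [hsin, hsin, hsin]
  simp only [add_mul, sub_mul]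
  linear_combination two_mul_sin_mul_cos (β * t) (γ * t) / t

lemma sign_add_add_sign_sub_of_abs_lt {β γ : ℝ} (h : |γ| < β) :
    sign (β + γ) + sign (β - γ) = 2 := by
  obtain ⟨h₁, h₂⟩ := abs_lt.mp h
  rw [sign_of_pos (by linarith), sign_of_pos (by linarith)]
  norm_num

lemma sign_add_add_sign_sub_of_lt_abs {β γ : ℝ} (hβ : 0 < β) (h : β < |γ|) :
    sign (β + γ) + sign (β - γ) = 0 := by
  rcases lt_abs.mp h with h | h
  · rw [sign_of_pos (by linarith), sign_of_neg (by linarith)]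
    norm_num
  · rw [sign_of_neg (by linarith), sign_of_pos (by linarith)]
    norm_num

end Real

theorem intervalIntegral.integral_neg_self_eq_integral_add_comp_neg {E : Type*}
    [NormedAddCommGroup E] [NormedSpace ℝ E] {f : ℝ → E} (hf : Continuous f) (R : ℝ) :
    ∫ x in -R..R, f x = ∫ x in 0..R, (f x + f (-x)) := by
  have hf' : Continuous fun x => f (-x) := hf.comp continuous_neg
  rw [intervalIntegral.integral_add (hf.intervalIntegrable _ _)
      (hf'.intervalIntegrable _ _), intervalIntegral.integral_comp_neg,
    neg_zero, add_comm, intervalIntegral.integral_add_adjacent_intervals (hf.intervalIntegrable _ _)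
      (hf.intervalIntegrable _ _)]

theorem tendsto_integral_mul_sinc_mul_mul_exp (β γ : ℝ) :
    Tendsto (fun R : ℝ =>
        ∫ t in -R..R, ((β * Real.sinc (β * t) : ℝ) : ℂ) * exp (-(γ * t : ℝ) * I))
      atTop (𝓝 (((Real.sign (β + γ) + Real.sign (β - γ)) * (π / 2) : ℝ) : ℂ)) := by
  have hcont :
      Continuous fun t : ℝ => ((β * Real.sinc (β * t) : ℝ) : ℂ) * exp (-(γ * t : ℝ) * I) :=
    (continuous_ofReal.comp (Real.continuous_mul_sinc_mul β)).mul (by fun_prop)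
  have hsym (t : ℝ) : ((β * Real.sinc (β * t) : ℝ) : ℂ) * exp (-(γ * t : ℝ) * I) +
      ((β * Real.sinc (β * -t) : ℝ) : ℂ) * exp (-(γ * -t : ℝ) * I) =
      (((β + γ) * Real.sinc ((β + γ) * t) + (β - γ) * Real.sinc ((β - γ) * t) : ℝ) : ℂ) := by
    rw [← Real.two_mul_mul_sinc_mul_cos, mul_neg, Real.sinc_neg]
    push_cast
    rw [mul_neg, neg_neg]
    linear_combination -((β : ℂ) * Real.sinc (β * t)) * two_cos (γ * t)
  simp_rw [intervalIntegral.integral_neg_self_eq_integral_add_comp_neg hcont, hsym,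
    intervalIntegral.integral_ofReal]
  refine (continuous_ofReal.tendsto _).comp ?_
  rw [add_mul]
  refine ((Real.tendsto_integral_mul_sinc_mul _).add
    (Real.tendsto_integral_mul_sinc_mul _)).congr fun R => ?_
  exact (intervalIntegral.integral_add ((Real.continuous_mul_sinc_mul _).intervalIntegrable _ _)
    ((Real.continuous_mul_sinc_mul _).intervalIntegrable _ _)).symm

lemma conj_neg_two_pi_I_mul_cpow_half (b : ℝ) :
    conj (((-2 : ℂ) * π * I * b) ^ ((1 : ℂ) / 2)) = (2 * π * I * b) ^ ((1 : ℂ) / 2) := by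
  have harg : ((-2 : ℂ) * π * I * b).arg ≠ π := by
    rw [Ne, arg_eq_pi_iff]
    simp
  have h := conj_cpow _ ((1 : ℂ) / 2) harg
  have hx : conj ((-2 : ℂ) * π * I * b) = 2 * π * I * b := by
    simp only [map_mul, map_neg, map_ofNat, conj_ofReal, conj_I]
    ring
  have hn : conj ((1 : ℂ) / 2) = 1 / 2 := by rw [map_div₀, map_one, map_ofNat]
  rw [hn, hx] at h
  exact h.symm

lemma sinc_eq_real_sinc_pi_mul (x : ℝ) : sinc x = Real.sinc (π * x) := by
  simp only [sinc, Real.sinc, mul_eq_zero, Real.pi_ne_zero, false_or]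

lemma phiLP_mul_conj_lctKernel (a b d Ω ω t : ℝ) :
    phiLP a b Ω t * conj (lctKernel a b d t ω) =
      exp (I * d * ω ^ 2 / (2 * b)) / (2 * π * I * b) ^ ((1 : ℂ) / 2) / π *
        (((π * Ω / b * Real.sinc (π * Ω / b * t) : ℝ) : ℂ) * exp (-(ω / b * t : ℝ) * I)) := by
  have hexp : exp (-I * a * t ^ 2 / (2 * b)) *
      exp (I / (2 * b) * (a * t ^ 2 + d * ω ^ 2 - 2 * ω * t)) =
      exp (I * d * ω ^ 2 / (2 * b)) * exp (-(ω / b * t : ℝ) * I) := by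
    rw [← exp_add, ← exp_add]
    push_cast
    ring_nf
  have hconj : conj (-(I / (2 * b)) * (a * t ^ 2 + d * ω ^ 2 - 2 * ω * t) : ℂ) =
      I / (2 * b) * (a * t ^ 2 + d * ω ^ 2 - 2 * ω * t) := by
    simp only [map_mul, map_neg, map_div₀, map_add, map_sub, map_pow, map_ofNat, conj_ofReal,
      conj_I]
    ring
  rw [phiLP, lctKernel, map_mul, map_inv₀, conj_neg_two_pi_I_mul_cpow_half, ← exp_conj, hconj,
    sinc_eq_real_sinc_pi_mul, show π * (Ω * t / b) = π * Ω / b * t by ring]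
  push_cast at hexp ⊢
  have hπ : (π : ℂ) ≠ 0 := ofReal_ne_zero.mpr Real.pi_ne_zero
  linear_combination (norm := skip)
    (Ω / b * Real.sinc (π * Ω / b * t) * ((2 * π * I * b) ^ ((1 : ℂ) / 2))⁻¹ : ℂ) * hexp
  field_simp
  ring

theorem phiLP_bandlimited_phase_space_general (a b d : ℝ) (hb : 0 < b)
    (Ω : ℝ) (hΩ : 0 < Ω) (ω : ℝ) :
    (|ω| < Real.pi * Ω →
      Tendsto (fun R : ℝ => ∫ t in (-R)..R, phiLP a b Ω t * (starRingEnd ℂ) (lctKernel a b d t ω))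
        atTop (nhds (Complex.exp (Complex.I * (d : ℂ) * (ω : ℂ) ^ 2 / (2 * (b : ℂ))) /
          ((2 * (Real.pi : ℂ) * Complex.I * (b : ℂ)) ^ ((1 : ℂ) / 2))))) ∧
    (Real.pi * Ω < |ω| →
      Tendsto (fun R : ℝ => ∫ t in (-R)..R, phiLP a b Ω t * (starRingEnd ℂ) (lctKernel a b d t ω))
        atTop (nhds 0)) := by
  have hlim := (tendsto_integral_mul_sinc_mul_mul_exp (π * Ω / b) (ω / b)).const_mul
    (exp (I * d * ω ^ 2 / (2 * b)) / (2 * π * I * b) ^ ((1 : ℂ) / 2) / π)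
  simp_rw [phiLP_mul_conj_lctKernel, intervalIntegral.integral_const_mul]
  have habs : |ω / b| = |ω| / b := by rw [abs_div, abs_of_pos hb]
  refine ⟨fun h => ?_, fun h => ?_⟩
  · rw [Real.sign_add_add_sign_sub_of_abs_lt (by rw [habs]; gcongr)] at hlim
    convert hlim using 2
    push_cast
    field_simp
  · rw [Real.sign_add_add_sign_sub_of_lt_abs (by positivity) (by rw [habs]; gcongr)] at hlim
    simpa using hlim

/-- **`φ_LP` is bandlimited in phase space:** for `|ω| < πΩ` the improper integral
`lim_{R→∞} ∫_{-R}^R φ_LP(t) conj (k_Λ(t,ω)) dt` exists and equals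
`e^{i d ω²/(2b)} / √(2πib)`, and for `|ω| > πΩ` it exists and equals `0`. -/
theorem phiLP_bandlimited_phase_space (a b c d : ℝ) (hdet : a * d - b * c = 1) (hb : 0 < b)
    (Ω : ℝ) (hΩ : 0 < Ω) (ω : ℝ) :
    (|ω| < Real.pi * Ω →
      Tendsto (fun R : ℝ => ∫ t in (-R)..R, phiLP a b Ω t * (starRingEnd ℂ) (lctKernel a b d t ω))
        atTop (nhds (Complex.exp (Complex.I * (d : ℂ) * (ω : ℂ) ^ 2 / (2 * (b : ℂ))) /
          ((2 * (Real.pi : ℂ) * Complex.I * (b : ℂ)) ^ ((1 : ℂ) / 2))))) ∧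
    (Real.pi * Ω < |ω| →
      Tendsto (fun R : ℝ => ∫ t in (-R)..R, phiLP a b Ω t * (starRingEnd ℂ) (lctKernel a b d t ω))
        atTop (nhds 0)) :=
  phiLP_bandlimited_phase_space_general a b d hb Ω hΩ ω
end
end
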